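/- arXiv:1804.10203 — 6 statements merged into one kernel-verified Lean document; each statement's English description precedes it below -/
import Mathlib

section
/- If p is a complex polynomial of degree n, then max_{|z|=1} |p'(z)| ≤ n · max_{|z|=1} |p(z)|. -/
open Polynomial Metric

noncomputable def polyMaxOn (p : Polynomial ℂ) (r : ℝ) : ℝ :=
  sSup ((fun z => ‖p.eval z‖) '' sphere (0 : ℂ) r)

/-!
If `‖p'(z₀)‖ > n M` at some `‖z₀‖ = 1`, where `M` is the maximum of `‖p‖` on the unit circle,
choose `c` with `n c z₀ⁿ⁻¹ = p'(z₀)`, so that `‖c‖ > M`. By the maximum modulus principle applied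
to the reversed polynomial, `‖p(z)‖ ≤ M ‖z‖ⁿ` for `‖z‖ ≥ 1`, so all roots of `g = c Xⁿ - p` lie in
the open unit disk, and `g` is nonconstant because `‖lc p‖ ≤ M < ‖c‖`. By Gauss–Lucas the roots
of `g'` lie in the open unit disk too, yet `g'(z₀) = 0`.
-/

namespace Polynomial

theorem isRoot_derivative_mem_of_convex {P : ℂ[X]} {s : Set ℂ} (hs : Convex ℝ s)
    (hP : 0 < P.degree) (hroots : ∀ w, P.IsRoot w → w ∈ s) {z : ℂ}
    (hz : P.derivative.IsRoot z) : z ∈ s := by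
  have hsub : P.rootSet ℂ ⊆ s := fun w hw => hroots w (by simpa using (mem_rootSet'.1 hw).2)
  have hP' : P.derivative ≠ 0 := derivative_ne_zero.2 (natDegree_pos_iff_degree_pos.2 hP).ne'
  exact convexHull_min hsub hs (rootSet_derivative_subset_convexHull_rootSet hP
    ((mem_rootSet_of_ne hP').2 (by simpa using hz)))

theorem eval_eq_eval_reverse_inv_mul_pow {K : Type*} [Field K] (p : K[X]) {z : K} (hz : z ≠ 0) :
    p.eval z = p.reverse.eval z⁻¹ * z ^ p.natDegree := by
  have := invertibleOfNonzero hz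
  rw [← invOf_eq_inv, eval, eval, eval₂_reverse_mul_pow]

end Polynomial

theorem bddAbove_norm_eval_sphere (p : ℂ[X]) (r : ℝ) :
    BddAbove ((fun z => ‖p.eval z‖) '' sphere (0 : ℂ) r) :=
  ((isCompact_sphere 0 r).image (continuous_norm.comp p.continuous)).bddAbove

theorem norm_eval_le_polyMaxOn (p : ℂ[X]) {r : ℝ} {z : ℂ} (hz : ‖z‖ = r) :
    ‖p.eval z‖ ≤ polyMaxOn p r :=
  le_csSup (bddAbove_norm_eval_sphere p r) ⟨z, mem_sphere_zero_iff_norm.2 hz, rfl⟩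

theorem polyMaxOn_le {p : ℂ[X]} {r C : ℝ} (hr : 0 ≤ r) (h : ∀ z, ‖z‖ = r → ‖p.eval z‖ ≤ C) :
    polyMaxOn p r ≤ C :=
  csSup_le ((NormedSpace.sphere_nonempty.2 hr).image _)
    (by rintro _ ⟨z, hz, rfl⟩; exact h z (mem_sphere_zero_iff_norm.1 hz))

theorem norm_eval_reverse_le_polyMaxOn (p : ℂ[X]) {w : ℂ} (hw : ‖w‖ ≤ 1) :
    ‖p.reverse.eval w‖ ≤ polyMaxOn p 1 := by
  refine Complex.norm_le_of_forall_mem_frontier_norm_le isBounded_ball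
    p.reverse.differentiable.diffContOnCl (fun u hu => ?_)
    (by rwa [closure_ball 0 one_ne_zero, mem_closedBall_zero_iff])
  rw [frontier_ball 0 one_ne_zero, mem_sphere_zero_iff_norm] at hu
  have hu0 : u ≠ 0 := norm_ne_zero_iff.1 (hu ▸ one_ne_zero)
  have h := congrArg norm (p.eval_eq_eval_reverse_inv_mul_pow (inv_ne_zero hu0))
  rw [inv_inv, norm_mul, norm_pow, norm_inv, hu, inv_one, one_pow, mul_one] at h
  exact h ▸ norm_eval_le_polyMaxOn p (by rw [norm_inv, hu, inv_one])

theorem norm_eval_le_polyMaxOn_mul_pow (p : ℂ[X]) {z : ℂ} (hz : 1 ≤ ‖z‖) :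
    ‖p.eval z‖ ≤ polyMaxOn p 1 * ‖z‖ ^ p.natDegree := by
  have hz0 : z ≠ 0 := norm_pos_iff.1 (one_pos.trans_le hz)
  rw [p.eval_eq_eval_reverse_inv_mul_pow hz0, norm_mul, norm_pow]
  gcongr
  exact norm_eval_reverse_le_polyMaxOn p (by rw [norm_inv]; exact inv_le_one_of_one_le₀ hz)

theorem norm_leadingCoeff_le_polyMaxOn (p : ℂ[X]) : ‖p.leadingCoeff‖ ≤ polyMaxOn p 1 := by
  simpa [← coeff_zero_reverse, coeff_zero_eq_eval_zero] using
    norm_eval_reverse_le_polyMaxOn p (w := 0) (by simp)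

section Comparison

variable {p : ℂ[X]} {c : ℂ}

theorem norm_lt_one_of_isRoot_C_mul_X_pow_sub (hc : polyMaxOn p 1 < ‖c‖) {w : ℂ}
    (hw : (C c * X ^ p.natDegree - p).IsRoot w) : ‖w‖ < 1 := by
  by_contra! hw1
  have hpw : p.eval w = c * w ^ p.natDegree := by
    have h := hw.eq_zero
    simp only [eval_sub, eval_mul, eval_C, eval_pow, eval_X] at h
    exact (sub_eq_zero.1 h).symm
  have h := norm_eval_le_polyMaxOn_mul_pow p hw1
  rw [hpw, norm_mul, norm_pow] at h
  exact hc.not_ge (le_of_mul_le_mul_right h (pow_pos (one_pos.trans_le hw1) _))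

theorem degree_C_mul_X_pow_sub_pos (hp : 0 < p.natDegree) (hc : polyMaxOn p 1 < ‖c‖) :
    0 < (C c * X ^ p.natDegree - p).degree := by
  have hcoeff : (C c * X ^ p.natDegree - p).coeff p.natDegree ≠ 0 := by
    rw [coeff_sub, coeff_C_mul_X_pow, if_pos rfl, ← leadingCoeff, sub_ne_zero]
    rintro rfl
    exact hc.not_ge (norm_leadingCoeff_le_polyMaxOn p)
  exact (WithBot.coe_pos.2 hp).trans_le (le_degree_of_ne_zero hcoeff)

theorem norm_eval_derivative_le_natDegree_mul_polyMaxOn (hp : 0 < p.natDegree) {z : ℂ}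
    (hz : ‖z‖ = 1) : ‖p.derivative.eval z‖ ≤ p.natDegree * polyMaxOn p 1 := by
  set n := p.natDegree
  by_contra! hlt
  have hz0 : z ≠ 0 := norm_ne_zero_iff.1 (hz ▸ one_ne_zero)
  have hn0 : (n : ℂ) ≠ 0 := by exact_mod_cast hp.ne'
  set c := p.derivative.eval z / (n * z ^ (n - 1))
  have hc : polyMaxOn p 1 < ‖c‖ := by
    rw [norm_div, norm_mul, norm_pow, hz, one_pow, mul_one, Complex.norm_natCast,
      lt_div_iff₀ (by exact_mod_cast hp), mul_comm]
    exact hlt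
  have hroot : (C c * X ^ n - p).derivative.IsRoot z := by
    simp only [IsRoot, derivative_sub, derivative_C_mul, derivative_X_pow, eval_sub, eval_mul,
      eval_C, eval_pow, eval_X, c]
    field_simp
    ring
  have hmem := isRoot_derivative_mem_of_convex (convex_ball 0 1)
    (degree_C_mul_X_pow_sub_pos hp hc)
    (fun w hw => mem_ball_zero_iff.2 (norm_lt_one_of_isRoot_C_mul_X_pow_sub hc hw)) hroot
  exact (mem_ball_zero_iff.1 hmem).ne hz

end Comparison

theorem bernstein_polynomial_inequality (p : Polynomial ℂ) (n : ℕ) (hn : 1 ≤ n) (hdeg : p.natDegree = n) :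
    polyMaxOn (derivative p) 1 ≤ n * polyMaxOn p 1 := by
  subst hdeg
  exact polyMaxOn_le zero_le_one fun z hz =>
    norm_eval_derivative_le_natDegree_mul_polyMaxOn hn hz
end

section
/- If p is a complex polynomial of degree n having no zero in the open unit disk, then max_{|z|=1} |p'(z)| ≤ (n/2) · [max_{|z|=1} |p(z)| − min_{|z|=1} |p(z)|]. -/
/-!
Write `D p(z) = n p(z) - z p'(z)` (the polar derivative of `p` with pole `0`; on `|z| = 1` it has the
modulus of `q'(z)` for the reciprocal polynomial `q(z) = zⁿ conj (p (1 / conj z))`). Factoring `p`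
over its roots, `Re (z p'(z) conj p(z)) ≤ (n / 2) |p(z)|²` on `|z| = 1`, since each root `r` with
`|r| ≥ 1` contributes `Re (z / (z - r)) ≤ 1 / 2`; expanding `|D p(z)|²` this is `|p'(z)| ≤ |D p(z)|`.

For `|c| < m` (minimum modulus principle) and for `|c| > M` (maximum modulus principle) the
polynomial `p - c` still has no zero in the open disk, and `D (p - c) = D p - n c`, so
`|p'(z)| ≤ |D p(z) - n c|`. Taking `c` on the ray through `D p(z)` gives `|p'(z)| + n m ≤ |D p(z)|`
and `|p'(z)| + |D p(z)| ≤ n M`; adding the two proves the bound.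
-/

open Polynomial Metric

noncomputable def maxOn' (p : Polynomial ℂ) (r : ℝ) : ℝ :=
  sSup ((fun z => ‖p.eval z‖) '' sphere (0 : ℂ) r)

noncomputable def minOn' (p : Polynomial ℂ) (r : ℝ) : ℝ :=
  sInf ((fun z => ‖p.eval z‖) '' sphere (0 : ℂ) r)

open ComplexConjugate

section

variable {E : Type*} [NormedAddCommGroup E] [NormedSpace ℝ E] [Nontrivial E]

theorem exists_sameRay_norm_eq (x : E) {s : ℝ} (hs : 0 ≤ s) :
    ∃ y : E, ‖y‖ = s ∧ SameRay ℝ x y := by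
  rcases eq_or_ne x 0 with rfl | hx
  · obtain ⟨y, hy⟩ := exists_norm_eq E hs
    exact ⟨y, hy, .zero_left y⟩
  · refine ⟨(s / ‖x‖) • x, ?_, SameRay.sameRay_nonneg_smul_right x (by positivity)⟩
    rw [norm_smul, Real.norm_of_nonneg (by positivity), div_mul_cancel₀ _ (norm_ne_zero_iff.2 hx)]

theorem add_le_norm_of_forall_norm_lt {a r : ℝ} {x : E} (ha : 0 < a) (hr : 0 < r)
    (h : ∀ y : E, ‖y‖ < r → a ≤ ‖x - y‖) : a + r ≤ ‖x‖ := by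
  have hrx : r ≤ ‖x‖ := le_of_not_gt fun hx => by simpa [ha.not_ge] using h x hx
  rw [← le_sub_iff_add_le']
  refine le_of_forall_lt_imp_le_of_dense fun s hs => ?_
  obtain ⟨y, hy, hxy⟩ := exists_sameRay_norm_eq x (le_max_left 0 s)
  have hay := h y (hy ▸ max_lt hr hs)
  rw [hxy.norm_sub, hy, abs_of_nonneg (by linarith [max_lt hr hs])] at hay
  linarith [le_max_right 0 s]

theorem add_norm_le_of_forall_lt_norm {a R : ℝ} {x : E} (ha : 0 < a)
    (h : ∀ y : E, R < ‖y‖ → a ≤ ‖x - y‖) : a + ‖x‖ ≤ R := by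
  have hxR : ‖x‖ ≤ R := le_of_not_gt fun hx => by simpa [ha.not_ge] using h x hx
  refine le_of_forall_gt_imp_ge_of_dense fun s hs => ?_
  obtain ⟨y, hy, hxy⟩ := exists_sameRay_norm_eq x (by linarith [norm_nonneg x] : 0 ≤ s)
  have hay := h y (hy ▸ hs)
  rw [hxy.norm_sub, hy, abs_sub_comm, abs_of_nonneg (by linarith)] at hay
  linarith

end

namespace Complex

theorem re_mul_conj_sub_le {z r : ℂ} (h : ‖z‖ ≤ ‖r‖) :
    (z * conj (z - r)).re ≤ normSq (z - r) / 2 := by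
  have hsq : normSq z ≤ normSq r := by
    simpa only [normSq_eq_norm_sq] using pow_le_pow_left₀ (norm_nonneg z) h 2
  have hre : (z * conj (z - r)).re = normSq z - (z * conj r).re := by
    rw [map_sub, mul_sub, sub_re, mul_conj, ofReal_re]
  rw [hre, normSq_sub]
  linarith

theorem norm_le_of_forall_mem_sphere {f : ℂ → ℂ} {M : ℝ} (hf : DiffContOnCl ℂ f (ball 0 1))
    (hM : ∀ w ∈ sphere (0 : ℂ) 1, ‖f w‖ ≤ M) {w : ℂ} (hw : ‖w‖ ≤ 1) : ‖f w‖ ≤ M :=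
  norm_le_of_forall_mem_frontier_norm_le isBounded_ball hf
    (by rwa [frontier_ball _ one_ne_zero])
    (by rwa [closure_ball _ one_ne_zero, mem_closedBall_zero_iff])

end Complex

open Complex

theorem re_mul_eval_derivative_mul_conj_mul (f g : ℂ[X]) (z : ℂ) :
    (z * (derivative (f * g)).eval z * conj ((f * g).eval z)).re =
      (z * (derivative f).eval z * conj (f.eval z)).re * normSq (g.eval z) +
        (z * (derivative g).eval z * conj (g.eval z)).re * normSq (f.eval z) := by
  have h : z * (derivative (f * g)).eval z * conj ((f * g).eval z) =
      z * (derivative f).eval z * conj (f.eval z) * (normSq (g.eval z) : ℂ) +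
        z * (derivative g).eval z * conj (g.eval z) * (normSq (f.eval z) : ℂ) := by
    simp only [derivative_mul, eval_add, eval_mul, map_mul, ← mul_conj]
    ring
  rw [h, add_re, re_mul_ofReal, re_mul_ofReal]

theorem re_mul_eval_derivative_mul_conj_prod_le (z : ℂ) (s : Multiset ℂ)
    (hs : ∀ r ∈ s, ‖z‖ ≤ ‖r‖) :
    (z * (derivative (s.map (X - C ·)).prod).eval z * conj ((s.map (X - C ·)).prod.eval z)).re ≤
      s.card / 2 * normSq ((s.map (X - C ·)).prod.eval z) := by
  induction s using Multiset.induction_on with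
  | empty => simp
  | cons r s ih =>
    set q := (s.map (X - C ·)).prod
    have hlin := re_mul_conj_sub_le (hs r (Multiset.mem_cons_self r s))
    have hq := ih fun r' hr' => hs r' (Multiset.mem_cons_of_mem hr')
    rw [Multiset.map_cons, Multiset.prod_cons, re_mul_eval_derivative_mul_conj_mul,
      eval_mul, normSq_mul, Multiset.card_cons]
    simp only [derivative_sub, derivative_X, derivative_C, sub_zero, eval_one, mul_one, eval_sub,
      eval_X, eval_C]
    push_cast
    nlinarith [mul_le_mul_of_nonneg_right hlin (normSq_nonneg (q.eval z)),
      mul_le_mul_of_nonneg_right hq (normSq_nonneg (z - r))]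

theorem re_mul_eval_derivative_mul_conj_le (p : ℂ[X]) (z : ℂ)
    (hp : ∀ w, p.eval w = 0 → ‖z‖ ≤ ‖w‖) :
    (z * (derivative p).eval z * conj (p.eval z)).re ≤ p.natDegree / 2 * normSq (p.eval z) := by
  have hprod := re_mul_eval_derivative_mul_conj_prod_le z p.roots
    fun r hr => hp r (mem_roots'.1 hr).2
  have hp_eq :=
    C_leadingCoeff_mul_prod_multiset_X_sub_C (IsAlgClosed.card_roots_eq_natDegree (p := p))
  rw [IsAlgClosed.card_roots_eq_natDegree] at hprod
  conv_lhs => rw [← hp_eq, re_mul_eval_derivative_mul_conj_mul]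
  have heval : p.eval z = p.leadingCoeff * (p.roots.map (X - C ·)).prod.eval z := by
    conv_lhs => rw [← hp_eq]
    rw [eval_mul, eval_C]
  rw [heval, normSq_mul]
  simp only [derivative_C, eval_zero, mul_zero, zero_mul, zero_re, zero_add, eval_C]
  nlinarith [mul_le_mul_of_nonneg_right hprod (normSq_nonneg p.leadingCoeff)]

theorem le_norm_eval_of_forall_mem_sphere (p : ℂ[X]) {m : ℝ} (hm0 : 0 < m)
    (hp : ∀ w, p.eval w = 0 → 1 ≤ ‖w‖) (hm : ∀ w ∈ sphere (0 : ℂ) 1, m ≤ ‖p.eval w‖)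
    {w : ℂ} (hw : ‖w‖ ≤ 1) : m ≤ ‖p.eval w‖ := by
  have hne : ∀ w ∈ closedBall (0 : ℂ) 1, p.eval w ≠ 0 := fun w hw h0 => by
    have hsphere : w ∈ sphere (0 : ℂ) 1 :=
      mem_sphere_zero_iff_norm.2 (le_antisymm (mem_closedBall_zero_iff.1 hw) (hp w h0))
    linarith [hm w hsphere, norm_eq_zero.2 h0]
  have hinv : DiffContOnCl ℂ (fun w => (p.eval w)⁻¹) (ball 0 1) :=
    (p.differentiable.differentiableOn.inv
      (closure_ball (0 : ℂ) one_ne_zero ▸ hne)).diffContOnCl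
  have h := norm_le_of_forall_mem_sphere hinv
    (fun w hw => by simpa only [norm_inv] using inv_anti₀ hm0 (hm w hw)) hw
  rw [norm_inv] at h
  exact (inv_le_inv₀ (norm_pos_iff.2 (hne w (mem_closedBall_zero_iff.2 hw))) hm0).1 h

noncomputable def polarDeriv (α : ℂ) (p : ℂ[X]) (z : ℂ) : ℂ :=
  p.natDegree * p.eval z + (α - z) * (derivative p).eval z

theorem polarDeriv_sub_C (α c : ℂ) (p : ℂ[X]) (z : ℂ) :
    polarDeriv α (p - C c) z = polarDeriv α p z - p.natDegree * c := by
  simp only [polarDeriv, natDegree_sub_C, derivative_sub, derivative_C, sub_zero, eval_sub, eval_C]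
  ring

theorem norm_eval_derivative_le_norm_polarDeriv_zero (p : ℂ[X]) {z : ℂ} (hz : ‖z‖ = 1)
    (hp : ∀ w, p.eval w = 0 → 1 ≤ ‖w‖) : ‖(derivative p).eval z‖ ≤ ‖polarDeriv 0 p z‖ := by
  have hre := re_mul_eval_derivative_mul_conj_le p z (hz ▸ hp)
  have hcross : (p.natDegree * p.eval z * conj (z * (derivative p).eval z)).re =
      p.natDegree * (z * (derivative p).eval z * conj (p.eval z)).re := by
    rw [← re_ofReal_mul, ← conj_re]
    simp only [map_mul, map_natCast, conj_conj, ofReal_natCast]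
    ring_nf
  have hnp : normSq (p.natDegree * p.eval z) = p.natDegree ^ 2 * normSq (p.eval z) := by
    rw [normSq_mul, normSq_natCast, sq]
  rw [polarDeriv, zero_sub, neg_mul, ← sub_eq_add_neg, ← one_mul ‖(derivative p).eval z‖, ← hz,
    ← norm_mul, ← sq_le_sq₀ (norm_nonneg _) (norm_nonneg _), ← normSq_eq_norm_sq,
    ← normSq_eq_norm_sq, normSq_sub, hcross, hnp]
  nlinarith [normSq_nonneg (p.eval z), (Nat.cast_nonneg p.natDegree : (0 : ℝ) ≤ p.natDegree)]

theorem norm_eval_derivative_le_norm_polarDeriv_zero_sub (p : ℂ[X]) {z c : ℂ} (hz : ‖z‖ = 1)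
    (hc : ∀ w, ‖w‖ < 1 → p.eval w ≠ c) :
    ‖(derivative p).eval z‖ ≤ ‖polarDeriv 0 p z - p.natDegree * c‖ := by
  have h := norm_eval_derivative_le_norm_polarDeriv_zero (p - C c) hz fun w hw =>
    le_of_not_gt fun hlt => hc w hlt (by simpa [sub_eq_zero] using hw)
  rwa [derivative_sub, derivative_C, sub_zero, polarDeriv_sub_C] at h

theorem natDegree_ne_zero_of_eval_derivative_ne_zero {p : ℂ[X]} {z : ℂ}
    (h : (derivative p).eval z ≠ 0) : p.natDegree ≠ 0 :=
  fun hp => h (by rw [derivative_of_natDegree_zero hp, eval_zero])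

theorem norm_eval_derivative_add_mul_le_norm_polarDeriv_zero (p : ℂ[X]) {z : ℂ} {m : ℝ}
    (hz : ‖z‖ = 1) (hp : ∀ w, p.eval w = 0 → 1 ≤ ‖w‖)
    (hm : ∀ w ∈ sphere (0 : ℂ) 1, m ≤ ‖p.eval w‖) (hz' : (derivative p).eval z ≠ 0) :
    ‖(derivative p).eval z‖ + p.natDegree * m ≤ ‖polarDeriv 0 p z‖ := by
  have hn := natDegree_ne_zero_of_eval_derivative_ne_zero hz'
  have hn' : (0 : ℝ) < p.natDegree := Nat.cast_pos.2 (Nat.pos_of_ne_zero hn)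
  rcases le_or_gt m 0 with hm0 | hm0
  · nlinarith [norm_eval_derivative_le_norm_polarDeriv_zero p hz hp]
  refine add_le_norm_of_forall_norm_lt (norm_pos_iff.2 hz') (by positivity) fun y hy => ?_
  have hc : ∀ w, ‖w‖ < 1 → p.eval w ≠ y / p.natDegree := fun w hw hpw => by
    have hmin := le_norm_eval_of_forall_mem_sphere p hm0 hp hm hw.le
    rw [hpw, norm_div, norm_natCast, le_div_iff₀ hn'] at hmin
    linarith
  simpa [mul_div_cancel₀ y (Nat.cast_ne_zero.2 hn)] using
    norm_eval_derivative_le_norm_polarDeriv_zero_sub p hz hc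

theorem norm_eval_derivative_add_norm_polarDeriv_zero_le (p : ℂ[X]) {z : ℂ} {M : ℝ}
    (hz : ‖z‖ = 1) (hM : ∀ w ∈ sphere (0 : ℂ) 1, ‖p.eval w‖ ≤ M)
    (hz' : (derivative p).eval z ≠ 0) :
    ‖(derivative p).eval z‖ + ‖polarDeriv 0 p z‖ ≤ p.natDegree * M := by
  have hn := natDegree_ne_zero_of_eval_derivative_ne_zero hz'
  have hn' : (0 : ℝ) < p.natDegree := Nat.cast_pos.2 (Nat.pos_of_ne_zero hn)
  refine add_norm_le_of_forall_lt_norm (norm_pos_iff.2 hz') fun y hy => ?_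
  have hc : ∀ w, ‖w‖ < 1 → p.eval w ≠ y / p.natDegree := fun w hw hpw => by
    have hmax := norm_le_of_forall_mem_sphere p.differentiable.diffContOnCl hM hw.le
    rw [hpw, norm_div, norm_natCast, div_le_iff₀ hn'] at hmax
    linarith
  simpa [mul_div_cancel₀ y (Nat.cast_ne_zero.2 hn)] using
    norm_eval_derivative_le_norm_polarDeriv_zero_sub p hz hc

theorem norm_eval_derivative_le_half_natDegree_mul_sub (p : ℂ[X]) {z : ℂ} {m M : ℝ}
    (hz : z ∈ sphere (0 : ℂ) 1) (hp : ∀ w, p.eval w = 0 → 1 ≤ ‖w‖)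
    (hm : ∀ w ∈ sphere (0 : ℂ) 1, m ≤ ‖p.eval w‖)
    (hM : ∀ w ∈ sphere (0 : ℂ) 1, ‖p.eval w‖ ≤ M) :
    ‖(derivative p).eval z‖ ≤ p.natDegree / 2 * (M - m) := by
  by_cases hz' : (derivative p).eval z = 0
  · rw [hz', norm_zero]
    exact mul_nonneg (by positivity) (sub_nonneg.2 ((hm z hz).trans (hM z hz)))
  have hz1 : ‖z‖ = 1 := mem_sphere_zero_iff_norm.1 hz
  linarith [norm_eval_derivative_add_mul_le_norm_polarDeriv_zero p hz1 hp hm hz',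
    norm_eval_derivative_add_norm_polarDeriv_zero_le p hz1 hM hz']

theorem aziz_dawood_upper_general (p : Polynomial ℂ) (n : ℕ) (hdeg : p.natDegree = n)
    (hz : ∀ z : ℂ, p.eval z = 0 → 1 ≤ ‖z‖) :
    maxOn' (derivative p) 1 ≤ (n / 2 : ℝ) * (maxOn' p 1 - minOn' p 1) := by
  subst hdeg
  have hsphere : (sphere (0 : ℂ) 1).Nonempty := NormedSpace.sphere_nonempty.2 zero_le_one
  have hbdd : BddAbove ((fun z => ‖p.eval z‖) '' sphere (0 : ℂ) 1) :=
    ((isCompact_sphere 0 1).image (continuous_norm.comp p.continuous)).bddAbove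
  refine csSup_le (hsphere.image _) ?_
  rintro _ ⟨z, hz1, rfl⟩
  exact norm_eval_derivative_le_half_natDegree_mul_sub p hz1 hz
    (fun w hw => csInf_le ⟨0, by rintro _ ⟨_, _, rfl⟩; exact norm_nonneg _⟩ ⟨w, hw, rfl⟩)
    (fun w hw => le_csSup hbdd ⟨w, hw, rfl⟩)

theorem aziz_dawood_upper (p : Polynomial ℂ) (n : ℕ) (hn : 1 ≤ n) (hdeg : p.natDegree = n)
    (hz : ∀ z : ℂ, p.eval z = 0 → 1 ≤ ‖z‖) :
    maxOn' (derivative p) 1 ≤ (n / 2 : ℝ) * (maxOn' p 1 - minOn' p 1) :=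
  aziz_dawood_upper_general p n hdeg hz
end

section
/- If p is a complex polynomial of degree n with all its zeros in the closed unit disk {z : |z| ≤ 1}, then max_{|z|=1} |p'(z)| ≥ (n/2) · max_{|z|=1} |p(z)|. -/
/-!
At a point `z` with `p z ≠ 0`, the logarithmic derivative splits over the roots:
`z p'(z) / p(z) = ∑ z / (z - w)`. If `‖w‖ ≤ ‖z‖`, then
`2 Re (z · conj (z - w)) = ‖z‖² - ‖w‖² + ‖z - w‖² ≥ ‖z - w‖²`, so every summand has real part at
least `1/2`. Hence `(n/2) ‖p z‖ ≤ ‖p' z‖` on the unit circle, and evaluating this at a point where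
`‖p‖` attains its maximum gives the theorem.
-/

open Polynomial Metric

theorem Complex.one_half_le_re_div_sub {z w : ℂ} (hw : ‖w‖ ≤ ‖z‖) (hzw : z ≠ w) :
    1 / 2 ≤ (z / (z - w)).re := by
  have hpos : 0 < Complex.normSq (z - w) := Complex.normSq_pos.mpr (sub_ne_zero.mpr hzw)
  have hsq : Complex.normSq w ≤ Complex.normSq z := by
    simp only [Complex.normSq_eq_norm_sq]; gcongr
  rw [Complex.div_re, ← add_div, le_div_iff₀ hpos]
  simp only [Complex.normSq_apply, Complex.sub_re, Complex.sub_im] at hsq ⊢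
  nlinarith

theorem Polynomial.natDegree_div_two_le_re_mul_eval_derivative_div_eval {p : ℂ[X]} {z : ℂ}
    (hroots : ∀ w, p.IsRoot w → ‖w‖ ≤ ‖z‖) (hz : p.eval z ≠ 0) :
    (p.natDegree / 2 : ℝ) ≤ (z * p.derivative.eval z / p.eval z).re := by
  have hsum : z * p.derivative.eval z / p.eval z = (p.roots.map fun w => z / (z - w)).sum := by
    rw [mul_div_assoc, (IsAlgClosed.splits p).eval_derivative_div_eval_of_ne_zero hz,
      ← Multiset.sum_map_mul_left]
    simp only [mul_one_div]
  have hre : (p.roots.map fun w => z / (z - w)).sum.re =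
      (p.roots.map fun w => (z / (z - w)).re).sum := by
    rw [← Complex.coe_reAddGroupHom, map_multiset_sum, Multiset.map_map]; rfl
  have hhalf : ∀ x ∈ p.roots.map fun w => (z / (z - w)).re, 1 / 2 ≤ x := by
    simp only [Multiset.mem_map]
    rintro _ ⟨w, hw, rfl⟩
    have hw : p.IsRoot w := (mem_roots'.mp hw).2
    exact Complex.one_half_le_re_div_sub (hroots w hw) fun h => hz (h ▸ hw)
  calc (p.natDegree / 2 : ℝ) = p.roots.card • (1 / 2 : ℝ) := by
        rw [IsAlgClosed.card_roots_eq_natDegree, nsmul_eq_mul]; ring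
    _ ≤ _ := by simpa using Multiset.card_nsmul_le_sum hhalf
    _ = _ := by rw [hsum, hre]

theorem Polynomial.natDegree_div_two_mul_norm_eval_le {p : ℂ[X]} {z : ℂ}
    (hroots : ∀ w, p.IsRoot w → ‖w‖ ≤ ‖z‖) :
    (p.natDegree / 2 : ℝ) * ‖p.eval z‖ ≤ ‖z‖ * ‖p.derivative.eval z‖ := by
  by_cases hz : p.eval z = 0
  · rw [hz, norm_zero, mul_zero]; positivity
  have hpos : 0 < ‖p.eval z‖ := norm_pos_iff.mpr hz
  have hle : (p.natDegree / 2 : ℝ) ≤ ‖z‖ * ‖p.derivative.eval z‖ / ‖p.eval z‖ :=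
    calc (p.natDegree / 2 : ℝ) ≤ (z * p.derivative.eval z / p.eval z).re :=
          natDegree_div_two_le_re_mul_eval_derivative_div_eval hroots hz
      _ ≤ ‖z * p.derivative.eval z / p.eval z‖ := Complex.re_le_norm _
      _ = _ := by rw [norm_div, norm_mul]
  rwa [le_div_iff₀ hpos] at hle

theorem mul_polyMaxOn_le_polyMaxOn {p q : ℂ[X]} {c r : ℝ}
    (h : ∀ z ∈ sphere (0 : ℂ) r, c * ‖p.eval z‖ ≤ ‖q.eval z‖) :
    c * polyMaxOn p r ≤ polyMaxOn q r := by
  have hcont (f : ℂ[X]) : ContinuousOn (fun z => ‖f.eval z‖) (sphere (0 : ℂ) r) :=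
    (continuous_norm.comp f.continuous).continuousOn
  rcases (sphere (0 : ℂ) r).eq_empty_or_nonempty with hempty | hne
  · simp [polyMaxOn, hempty]
  obtain ⟨z, hz, hmax⟩ := (isCompact_sphere 0 r).exists_sSup_image_eq hne (hcont p)
  have hbdd := ((isCompact_sphere 0 r).image_of_continuousOn (hcont q)).bddAbove
  calc c * polyMaxOn p r = c * ‖p.eval z‖ := by rw [polyMaxOn, hmax]
    _ ≤ ‖q.eval z‖ := h z hz
    _ ≤ polyMaxOn q r := le_csSup hbdd ⟨z, hz, rfl⟩

theorem turan_general (p : Polynomial ℂ) (n : ℕ) (hdeg : p.natDegree = n)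
    (hz : ∀ z : ℂ, p.eval z = 0 → ‖z‖ ≤ 1) :
    (n / 2 : ℝ) * polyMaxOn p 1 ≤ polyMaxOn (derivative p) 1 := by
  refine mul_polyMaxOn_le_polyMaxOn fun z hz1 => ?_
  have hnorm : ‖z‖ = 1 := by simpa using hz1
  have hpoint := natDegree_div_two_mul_norm_eval_le (p := p) fun w hw => hnorm ▸ hz w hw
  rwa [hnorm, one_mul, hdeg] at hpoint

theorem turan (p : Polynomial ℂ) (n : ℕ) (hn : 1 ≤ n) (hdeg : p.natDegree = n)
    (hz : ∀ z : ℂ, p.eval z = 0 → ‖z‖ ≤ 1) :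
    (n / 2 : ℝ) * polyMaxOn p 1 ≤ polyMaxOn (derivative p) 1 :=
  turan_general p n hdeg hz
end

section
/- If p is a complex polynomial of degree n having all its zeros in the closed disk {z : |z| ≤ k} with k ≤ 1, then max_{|z|=1} |p'(z)| ≥ (n/(1+k)) · [max_{|z|=1} |p(z)| + (1/k^{n−1}) · min_{|z|=k} |p(z)|]. -/
open Polynomial Metric

noncomputable def polyMinOn (p : Polynomial ℂ) (r : ℝ) : ℝ :=
  sInf ((fun z => ‖p.eval z‖) '' sphere (0 : ℂ) r)

/-!
Turán's inequality: if every zero `r` of `q` satisfies `|r| ≤ k ≤ 1` and `|z| = 1`, then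
`Re (z / (z - r)) ≥ 1 / (1 + k)`, hence `Re (z q'(z) / q(z)) ≥ n / (1 + k)` and
`n |q(z)| ≤ (1 + k) |q'(z)|`.

Let `m = min_{|z| = k} |p|`. The minimum modulus principle for the reversed polynomial on
`|u| ≤ 1/k` gives `|p(w)| ≥ m (|w| / k)^n` for `|w| ≥ k`, so for `|μ| < m / k^n` the polynomial
`p + μ z^n` still has degree `n` and all its zeros in `|z| < k`. At a point `z` of the unit circle,
rotate `μ` so that `n μ z^(n-1)` points against `p'(z)`. Turán for `p + μ z^n` then gives
`n (|p(z)| - |μ|) ≤ (1 + k) | |p'(z)| - n |μ| |`, and the right side is positive because `z` is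
not a zero of `p + μ z^n`. So `|p'(z)| - n |μ|` never changes sign as `|μ|` grows from `0`, and
letting `|μ| → m / k^n` yields `n (|p(z)| + m / k^(n-1)) ≤ (1 + k) |p'(z)|`. Take `z` where `|p|`
is maximal on the circle.
-/

open ComplexConjugate in
theorem Complex.one_le_mul_re_div_sub {k : ℝ} (hk : k ≤ 1) {z r : ℂ} (hz : ‖z‖ = 1)
    (hr : ‖r‖ ≤ k) (hzr : z ≠ r) : 1 ≤ (1 + k) * (z / (z - r)).re := by
  set x := (z * conj r).re
  have hpos : 0 < normSq (z - r) := normSq_pos.mpr (sub_ne_zero.mpr hzr)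
  have hre : (z / (z - r)).re = (1 - x) / normSq (z - r) := by
    rw [div_eq_mul_inv, inv_def, ← mul_assoc, re_mul_ofReal, map_sub, mul_sub, mul_conj,
      normSq_eq_norm_sq, hz, sub_re, div_eq_mul_inv]
    norm_num [x, mul_re]
  have hnormSq : normSq (z - r) = 1 - 2 * x + ‖r‖ ^ 2 := by
    rw [normSq_sub, normSq_eq_norm_sq, normSq_eq_norm_sq, hz]
    ring
  have hx : -‖r‖ ≤ x := by
    have := neg_abs_le x
    have := abs_re_le_norm (z * conj r)
    rw [norm_mul, norm_conj, hz, one_mul] at this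
    linarith
  rw [hre, mul_div_assoc', le_div_iff₀ hpos, one_mul, hnormSq]
  nlinarith [mul_nonneg (sub_nonneg.mpr hr) (by positivity : (0 : ℝ) ≤ 1 + ‖r‖),
    mul_nonneg (by linarith : (0 : ℝ) ≤ 1 - k) (by linarith : (0 : ℝ) ≤ x + ‖r‖)]

theorem Polynomial.natDegree_mul_norm_eval_le {k : ℝ} (hk0 : 0 ≤ k) (hk1 : k ≤ 1) {q : ℂ[X]}
    (hroots : ∀ w, q.eval w = 0 → ‖w‖ ≤ k) {z : ℂ} (hz : ‖z‖ = 1) :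
    q.natDegree * ‖q.eval z‖ ≤ (1 + k) * ‖(derivative q).eval z‖ := by
  by_cases hqz : q.eval z = 0
  · rw [hqz, norm_zero, mul_zero]
    positivity
  have hsplit : Splits q := IsAlgClosed.splits q
  set S := (q.roots.map fun r ↦ 1 / (z - r)).sum
  have hS : (q.natDegree : ℝ) ≤ (1 + k) * (z * S).re := by
    have hsum : (1 + k) * (z * S).re = (q.roots.map fun r ↦ (1 + k) * (z / (z - r)).re).sum := by
      rw [Multiset.sum_map_mul_left, ← Multiset.sum_map_mul_left]
      simp only [mul_one_div]
      congr 1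
      exact (map_multiset_sum Complex.reAddGroupHom _).trans (by rw [Multiset.map_map]; rfl)
    rw [hsum, hsplit.natDegree_eq_card_roots]
    have hcard := Multiset.card_nsmul_le_sum (a := (1 : ℝ)) fun x hx ↦ by
      obtain ⟨r, hr, rfl⟩ := Multiset.mem_map.mp hx
      have hqr : q.eval r = 0 := isRoot_of_mem_roots hr
      exact Complex.one_le_mul_re_div_sub hk1 hz (hroots r hqr) fun h ↦ hqz (h ▸ hqr)
    rwa [Multiset.card_map, nsmul_one] at hcard
  calc (q.natDegree : ℝ) * ‖q.eval z‖ ≤ (1 + k) * (z * S).re * ‖q.eval z‖ := by gcongr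
    _ ≤ (1 + k) * ‖z * S‖ * ‖q.eval z‖ := by gcongr; exact Complex.re_le_norm _
    _ = (1 + k) * ‖(derivative q).eval z‖ := by
        rw [hsplit.eval_derivative_eq_eval_mul_sum hqz, norm_mul, norm_mul, hz]; ring

theorem Complex.le_norm_of_forall_mem_frontier_le_norm {E : Type*} [NormedAddCommGroup E]
    [NormedSpace ℂ E] [Nontrivial E] {f : E → ℂ} {U : Set E} (hU : Bornology.IsBounded U)
    (hd : DiffContOnCl ℂ f U) (hf0 : ∀ z ∈ U, f z ≠ 0) {m : ℝ}
    (hm : ∀ z ∈ frontier U, m ≤ ‖f z‖) {z : E} (hz : z ∈ closure U) : m ≤ ‖f z‖ := by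
  rcases le_or_gt m 0 with hm0 | hm0
  · exact hm0.trans (norm_nonneg _)
  have hne : ∀ w ∈ closure U, f w ≠ 0 := by
    intro w hw
    by_cases hwU : w ∈ U
    · exact hf0 w hwU
    · exact norm_pos_iff.mp (hm0.trans_le (hm w ⟨hw, fun h ↦ hwU (interior_subset h)⟩))
  have hinv : ‖(f z)⁻¹‖ ≤ m⁻¹ :=
    Complex.norm_le_of_forall_mem_frontier_norm_le hU (f := fun w ↦ (f w)⁻¹)
      (hd.inv fun w hw ↦ hne w hw) (fun w hw ↦ by
        rw [norm_inv]
        exact inv_anti₀ hm0 (hm w hw)) hz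
  rw [norm_inv] at hinv
  exact (inv_le_inv₀ (norm_pos_iff.mpr (hne z hz)) hm0).mp hinv

theorem Polynomial.eval_inv_reverse_mul_pow {K : Type*} [Field K] (p : K[X]) {x : K}
    (hx : x ≠ 0) : p.reverse.eval x⁻¹ * x ^ p.natDegree = p.eval x := by
  let := invertibleOfNonzero hx
  simpa only [invOf_eq_inv, eval₂_id] using eval₂_reverse_mul_pow (RingHom.id K) x p

theorem Polynomial.le_pow_mul_norm_eval_reverse {p : ℂ[X]} {k m : ℝ} (hk : 0 < k)
    (hroots : ∀ w, p.eval w = 0 → ‖w‖ ≤ k) (hm : ∀ w : ℂ, ‖w‖ = k → m ≤ ‖p.eval w‖) {u : ℂ}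
    (hu : ‖u‖ ≤ k⁻¹) : m ≤ k ^ p.natDegree * ‖p.reverse.eval u‖ := by
  rcases le_or_gt m 0 with hm0 | hm0
  · exact hm0.trans (by positivity)
  have hp : p ≠ 0 := by
    rintro rfl
    simpa using hm0.trans_le (hm k (by simp [hk.le]))
  have hkinv : k⁻¹ ≠ 0 := inv_ne_zero hk.ne'
  have hsphere : ∀ v ∈ frontier (ball (0 : ℂ) k⁻¹), m / k ^ p.natDegree ≤ ‖p.reverse.eval v‖ := by
    intro v hv
    rw [frontier_ball 0 hkinv, mem_sphere_zero_iff_norm] at hv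
    have hv0 : v ≠ 0 := norm_pos_iff.mp (hv ▸ inv_pos.mpr hk)
    have h := hm v⁻¹ (by rw [norm_inv, hv, inv_inv])
    rw [← eval_inv_reverse_mul_pow p (inv_ne_zero hv0), inv_inv, norm_mul, norm_pow, norm_inv,
      hv, inv_inv] at h
    rwa [div_le_iff₀ (by positivity)]
  have hne : ∀ v ∈ ball (0 : ℂ) k⁻¹, p.reverse.eval v ≠ 0 := by
    intro v hv hrev
    rw [mem_ball_zero_iff] at hv
    rcases eq_or_ne v 0 with rfl | hv0
    · rw [← coeff_zero_eq_eval_zero, coeff_zero_reverse] at hrev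
      exact hp (leadingCoeff_eq_zero.mp hrev)
    · have hroot := hroots v⁻¹ <| by
        rw [← eval_inv_reverse_mul_pow p (inv_ne_zero hv0), inv_inv, hrev, zero_mul]
      rw [norm_inv] at hroot
      exact (inv_le_of_inv_le₀ (norm_pos_iff.mpr hv0) hroot).not_gt hv
  have h := Complex.le_norm_of_forall_mem_frontier_le_norm isBounded_ball
    p.reverse.differentiable.diffContOnCl hne hsphere
    (by rwa [closure_ball 0 hkinv, mem_closedBall_zero_iff])
  rwa [div_le_iff₀' (by positivity)] at h

theorem Polynomial.le_pow_mul_norm_leadingCoeff {p : ℂ[X]} {k m : ℝ} (hk : 0 < k)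
    (hroots : ∀ w, p.eval w = 0 → ‖w‖ ≤ k) (hm : ∀ w : ℂ, ‖w‖ = k → m ≤ ‖p.eval w‖) :
    m ≤ k ^ p.natDegree * ‖p.leadingCoeff‖ := by
  simpa [← coeff_zero_eq_eval_zero, coeff_zero_reverse] using
    le_pow_mul_norm_eval_reverse hk hroots hm (u := 0) (by simp [hk.le])

theorem Polynomial.mul_norm_pow_le_pow_mul_norm_eval {p : ℂ[X]} {k m : ℝ} (hk : 0 < k)
    (hroots : ∀ w, p.eval w = 0 → ‖w‖ ≤ k) (hm : ∀ w : ℂ, ‖w‖ = k → m ≤ ‖p.eval w‖) {w : ℂ}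
    (hw : k ≤ ‖w‖) : m * ‖w‖ ^ p.natDegree ≤ k ^ p.natDegree * ‖p.eval w‖ := by
  have hw0 : w ≠ 0 := norm_pos_iff.mp (hk.trans_le hw)
  have h := le_pow_mul_norm_eval_reverse hk hroots hm (u := w⁻¹)
    (by rw [norm_inv]; exact inv_anti₀ hk hw)
  rw [← eval_inv_reverse_mul_pow p hw0, norm_mul, norm_pow, ← mul_assoc]
  exact mul_le_mul_of_nonneg_right h (by positivity)

theorem Polynomial.natDegree_add_C_mul_X_pow_of_norm_lt {p : ℂ[X]} {k m : ℝ} (hk : 0 < k)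
    (hroots : ∀ w, p.eval w = 0 → ‖w‖ ≤ k) (hm : ∀ w : ℂ, ‖w‖ = k → m ≤ ‖p.eval w‖) {μ : ℂ}
    (hμ : k ^ p.natDegree * ‖μ‖ < m) :
    (p + C μ * X ^ p.natDegree).natDegree = p.natDegree := by
  refine natDegree_eq_of_le_of_coeff_ne_zero
    (natDegree_add_le_of_degree_le le_rfl (natDegree_C_mul_X_pow_le μ _)) fun hcoeff ↦ ?_
  rw [coeff_add, coeff_C_mul_X_pow, if_pos rfl, ← leadingCoeff, add_eq_zero_iff_eq_neg] at hcoeff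
  have := le_pow_mul_norm_leadingCoeff hk hroots hm
  rw [hcoeff, norm_neg] at this
  exact this.not_gt hμ

theorem Polynomial.norm_lt_of_eval_add_C_mul_X_pow_eq_zero {p : ℂ[X]} {k m : ℝ} (hk : 0 < k)
    (hroots : ∀ w, p.eval w = 0 → ‖w‖ ≤ k) (hm : ∀ w : ℂ, ‖w‖ = k → m ≤ ‖p.eval w‖) {μ : ℂ}
    (hμ : k ^ p.natDegree * ‖μ‖ < m) {w : ℂ} (hw : (p + C μ * X ^ p.natDegree).eval w = 0) :
    ‖w‖ < k := by
  by_contra! hkw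
  have hgrowth := mul_norm_pow_le_pow_mul_norm_eval hk hroots hm hkw
  rw [eval_add, eval_mul, eval_C, eval_pow, eval_X, add_eq_zero_iff_eq_neg] at hw
  rw [hw, norm_neg, norm_mul, norm_pow, ← mul_assoc] at hgrowth
  have hwn : 0 < ‖w‖ ^ p.natDegree := pow_pos (hk.trans_le hkw) _
  exact (mul_lt_mul_of_pos_right hμ hwn).not_ge hgrowth

open Complex in
theorem Polynomial.natDegree_mul_norm_eval_sub_le {p : ℂ[X]} {k m : ℝ} (hk0 : 0 < k)
    (hk1 : k ≤ 1) (hn : 0 < p.natDegree) (hroots : ∀ w, p.eval w = 0 → ‖w‖ ≤ k)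
    (hm : ∀ w : ℂ, ‖w‖ = k → m ≤ ‖p.eval w‖) {z : ℂ} (hz : ‖z‖ = 1) {c : ℝ} (hc0 : 0 ≤ c)
    (hc : k ^ p.natDegree * c < m) :
    p.natDegree * (‖p.eval z‖ - c) ≤
        (1 + k) * |‖(derivative p).eval z‖ - p.natDegree * c| ∧
      0 < |‖(derivative p).eval z‖ - p.natDegree * c| := by
  set n := p.natDegree
  set A := ‖(derivative p).eval z‖
  have hz0 : z ≠ 0 := norm_ne_zero_iff.mp (by rw [hz]; exact one_ne_zero)
  set u := exp (arg ((derivative p).eval z) * I)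
  have hu : ‖u‖ = 1 := norm_exp_ofReal_mul_I _
  set μ : ℂ := -(c * u) / z ^ (n - 1)
  have hμ : ‖μ‖ = c := by simp [μ, hu, hz, abs_of_nonneg hc0]
  set T := p + C μ * X ^ n
  have hTroots : ∀ w, T.eval w = 0 → ‖w‖ < k := fun w hw ↦
    norm_lt_of_eval_add_C_mul_X_pow_eq_zero hk0 hroots hm (by rwa [hμ]) hw
  have hTz : T.eval z ≠ 0 := fun h ↦ (hTroots z h).not_ge (hz ▸ hk1)
  have hT'z : (derivative T).eval z = ((A - n * c : ℝ) : ℂ) * u := by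
    have hAu : (derivative p).eval z = A * u := (norm_mul_exp_arg_mul_I _).symm
    simp only [T, μ, derivative_add, derivative_C_mul, derivative_X_pow, eval_add, eval_mul,
      eval_C, eval_pow, eval_X, hAu]
    field_simp
    push_cast
    ring
  have hTlow : ‖p.eval z‖ - c ≤ ‖T.eval z‖ := by
    have : T.eval z = p.eval z + μ * z ^ n := by simp [T]
    rw [this, ← hμ, ← mul_one ‖μ‖, ← one_pow n, ← hz, ← norm_pow, ← norm_mul]
    exact norm_sub_le_norm_add _ _
  have hturan := natDegree_mul_norm_eval_le hk0.le hk1 (q := T) (fun w hw ↦ (hTroots w hw).le) hz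
  rw [natDegree_add_C_mul_X_pow_of_norm_lt hk0 hroots hm (by rwa [hμ]), hT'z, norm_mul, hu,
    mul_one, Complex.norm_real, Real.norm_eq_abs] at hturan
  refine ⟨(mul_le_mul_of_nonneg_left hTlow (by positivity)).trans hturan, ?_⟩
  exact pos_of_mul_pos_right
    ((mul_pos (by exact_mod_cast hn) (norm_pos_iff.mpr hTz)).trans_le hturan) (by linarith)

theorem Polynomial.natDegree_mul_norm_eval_add_le {p : ℂ[X]} {k m : ℝ} (hk0 : 0 < k)
    (hk1 : k ≤ 1) (hn : 0 < p.natDegree) (hroots : ∀ w, p.eval w = 0 → ‖w‖ ≤ k)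
    (hm : ∀ w : ℂ, ‖w‖ = k → m ≤ ‖p.eval w‖) {z : ℂ} (hz : ‖z‖ = 1) :
    p.natDegree * (‖p.eval z‖ + k * m / k ^ p.natDegree) ≤
      (1 + k) * ‖(derivative p).eval z‖ := by
  set n := p.natDegree
  set A := ‖(derivative p).eval z‖
  have hkn : 0 < k ^ n := pow_pos hk0 n
  have hn' : (0 : ℝ) < n := by exact_mod_cast hn
  rcases le_or_gt m 0 with hm0 | hm0
  · calc n * (‖p.eval z‖ + k * m / k ^ n) ≤ n * ‖p.eval z‖ := by
          gcongr
          exact add_le_of_nonpos_right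
            (div_nonpos_of_nonpos_of_nonneg (mul_nonpos_of_nonneg_of_nonpos hk0.le hm0) hkn.le)
      _ ≤ (1 + k) * A := natDegree_mul_norm_eval_le hk0.le hk1 hroots hz
  set c₀ := m / k ^ n
  have hc₀ : 0 < c₀ := by positivity
  have hstep (c : ℝ) (hc : c ∈ Set.Ico 0 c₀) :=
    natDegree_mul_norm_eval_sub_le hk0 hk1 hn hroots hm hz hc.1
      (by rw [← lt_div_iff₀' hkn]; exact hc.2)
  have hA : n * c₀ ≤ A := by
    by_contra! h
    have := (hstep (A / n) ⟨by positivity, by rwa [div_lt_iff₀' hn']⟩).2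
    rw [mul_div_cancel₀ _ hn'.ne', sub_self, abs_zero] at this
    exact this.false
  have hlin : Set.Icc 0 c₀ ⊆ {c | n * ‖p.eval z‖ + n * k * c ≤ (1 + k) * A} := by
    rw [← closure_Ico hc₀.ne, (isClosed_le (by fun_prop) continuous_const).closure_subset_iff]
    intro c hc
    have h := (hstep c hc).1
    rw [abs_of_nonneg (by nlinarith [hc.2])] at h
    simp only [Set.mem_ofPred_eq]
    linarith
  calc n * (‖p.eval z‖ + k * m / k ^ n) = n * ‖p.eval z‖ + n * k * c₀ := by ring
    _ ≤ (1 + k) * A := hlin ⟨hc₀.le, le_rfl⟩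

theorem exists_polyMaxOn_eq (p : ℂ[X]) {r : ℝ} (hr : 0 ≤ r) :
    ∃ z : ℂ, ‖z‖ = r ∧ polyMaxOn p r = ‖p.eval z‖ := by
  obtain ⟨x, hgreatest⟩ := ((isCompact_sphere (0 : ℂ) r).image
    p.continuous.norm).exists_isGreatest ((NormedSpace.sphere_nonempty.mpr hr).image _)
  obtain ⟨z, hz, rfl⟩ := hgreatest.1
  exact ⟨z, mem_sphere_zero_iff_norm.mp hz, hgreatest.csSup_eq⟩

theorem polyMinOn_le_norm_eval (p : ℂ[X]) {r : ℝ} {z : ℂ} (hz : ‖z‖ = r) :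
    polyMinOn p r ≤ ‖p.eval z‖ :=
  csInf_le ⟨0, by rintro _ ⟨w, -, rfl⟩; exact norm_nonneg _⟩
    ⟨z, mem_sphere_zero_iff_norm.mpr hz, rfl⟩

theorem govil_lower (p : Polynomial ℂ) (n : ℕ) (k : ℝ) (hk0 : 0 < k) (hk : k ≤ 1)
    (hn : 1 ≤ n) (hdeg : p.natDegree = n)
    (hz : ∀ z : ℂ, p.eval z = 0 → ‖z‖ ≤ k) :
    (n / (1 + k)) * (polyMaxOn p 1 + (1 / k ^ (n - 1)) * polyMinOn p k) ≤
      polyMaxOn (derivative p) 1 := by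
  obtain ⟨z, hz1, hmax⟩ := exists_polyMaxOn_eq p zero_le_one
  have hpointwise := natDegree_mul_norm_eval_add_le hk0 hk (hdeg ▸ hn) hz
    (fun w hw ↦ polyMinOn_le_norm_eval p hw) hz1
  rw [hdeg, ← hmax] at hpointwise
  have hk_div : k * polyMinOn p k / k ^ n = 1 / k ^ (n - 1) * polyMinOn p k := by
    rw [← Nat.sub_add_cancel hn, pow_succ, Nat.add_sub_cancel]
    field_simp
  rw [hk_div] at hpointwise
  rw [div_mul_eq_mul_div, div_le_iff₀ (by positivity), mul_comm _ (1 + k)]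
  exact hpointwise.trans (by gcongr; exact norm_eval_le_polyMaxOn _ hz1)
end

section
/- For the polynomial p(z) = (z^μ + k^μ)^{n/μ} where μ divides n and 0 < k ≤ 1, equality holds in the Aziz–Shah inequality: max_{|z|=1} |p'(z)| = (n/(1+k^μ)) · [max_{|z|=1} |p(z)| + (1/k^{n−μ}) · min_{|z|=k} |p(z)|]. -/
/-!
On `‖z‖ = 1` we have `‖z ^ μ + k ^ μ‖ ≤ 1 + k ^ μ` with equality at `z = 1`, and both `‖p z‖` and
`‖p' z‖ = n ‖z ^ μ + k ^ μ‖ ^ (n / μ - 1)` are increasing functions of that norm, so both maxima are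
attained at `z = 1` and `max ‖p'‖ = n / (1 + k ^ μ) * max ‖p‖`. The minimum over `‖z‖ = k` is `0`,
since `k * exp (π i / μ)` is a zero of `p` on that circle.
-/

open Metric Set

section PowAddConst

variable {μ m : ℕ} {c : ℝ}

theorem hasDerivAt_pow_add_const_pow (μ m : ℕ) (w z : ℂ) :
    HasDerivAt (fun z => (z ^ μ + w) ^ m) (m * (z ^ μ + w) ^ (m - 1) * (μ * z ^ (μ - 1))) z :=
  ((hasDerivAt_pow μ z).add_const w).pow m

theorem isGreatest_norm_pow_add_ofReal_unitSphere (μ : ℕ) (hc : 0 ≤ c) :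
    IsGreatest ((fun z : ℂ => ‖z ^ μ + c‖) '' sphere 0 1) (1 + c) := by
  refine ⟨⟨1, by simp, ?_⟩, ?_⟩
  · simp only [one_pow]
    rw [← Complex.ofReal_one, ← Complex.ofReal_add, Complex.norm_real,
      Real.norm_of_nonneg (by positivity)]
  · rintro _ ⟨z, hz, rfl⟩
    rw [mem_sphere_zero_iff_norm] at hz
    calc ‖z ^ μ + c‖ ≤ ‖z ^ μ‖ + ‖(c : ℂ)‖ := norm_add_le _ _
      _ = 1 + c := by rw [norm_pow, hz, one_pow, Complex.norm_real, Real.norm_of_nonneg hc]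

theorem csSup_image_unitSphere_of_monotoneOn (hc : 0 ≤ c) {F : ℂ → ℝ} {g : ℝ → ℝ}
    (hg : MonotoneOn g (Ici 0)) (hF : ∀ z ∈ sphere (0 : ℂ) 1, F z = g ‖z ^ μ + c‖) :
    sSup (F '' sphere 0 1) = g (1 + c) := by
  have hFg : F '' sphere 0 1 = g '' ((fun z : ℂ => ‖z ^ μ + c‖) '' sphere 0 1) := by
    rw [image_image]
    exact image_congr hF
  rw [hFg]
  refine ((hg.mono ?_).map_isGreatest (isGreatest_norm_pow_add_ofReal_unitSphere μ hc)).csSup_eq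
  rintro _ ⟨z, -, rfl⟩
  exact norm_nonneg _

theorem csSup_norm_pow_add_ofReal_pow_unitSphere (hc : 0 ≤ c) :
    sSup ((fun z : ℂ => ‖(z ^ μ + c) ^ m‖) '' sphere 0 1) = (1 + c) ^ m :=
  csSup_image_unitSphere_of_monotoneOn hc (fun _ ha _ _ hab => pow_le_pow_left₀ ha hab m)
    fun _ _ => norm_pow _ m

theorem csSup_norm_deriv_pow_add_ofReal_pow_unitSphere (hc : 0 ≤ c) :
    sSup ((fun z : ℂ => ‖deriv (fun z : ℂ => (z ^ μ + c) ^ m) z‖) '' sphere 0 1) =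
      m * μ * (1 + c) ^ (m - 1) := by
  refine csSup_image_unitSphere_of_monotoneOn (μ := μ) (g := fun t => m * μ * t ^ (m - 1)) hc
    (fun _ ha _ _ hab => by dsimp only; gcongr) fun z hz => ?_
  rw [mem_sphere_zero_iff_norm] at hz
  rw [(hasDerivAt_pow_add_const_pow μ m _ z).deriv]
  simp only [norm_mul, norm_pow, Complex.norm_natCast, hz, one_pow, mul_one]
  ring

end PowAddConst

section ZeroOnSphere

variable {μ : ℕ} {k : ℝ}

theorem exists_mem_sphere_pow_eq_neg_pow (hk : 0 ≤ k) (hμ : μ ≠ 0) :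
    ∃ z ∈ sphere (0 : ℂ) k, z ^ μ = -(k : ℂ) ^ μ := by
  refine ⟨k * Complex.exp (Real.pi / μ * Complex.I), ?_, ?_⟩
  · rw [mem_sphere_zero_iff_norm, norm_mul, ← Complex.ofReal_natCast, ← Complex.ofReal_div,
      Complex.norm_exp_ofReal_mul_I, mul_one, Complex.norm_real, Real.norm_of_nonneg hk]
  · have hμπ : (μ : ℂ) * (Real.pi / μ * Complex.I) = Real.pi * Complex.I := by
      field_simp
    rw [mul_pow, ← Complex.exp_nat_mul, hμπ, Complex.exp_pi_mul_I, mul_neg_one]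

theorem csInf_norm_pow_add_pow_pow_sphere {m : ℕ} (hk : 0 ≤ k) (hμ : μ ≠ 0) (hm : m ≠ 0) :
    sInf ((fun z : ℂ => ‖(z ^ μ + (k : ℂ) ^ μ) ^ m‖) '' sphere 0 k) = 0 := by
  obtain ⟨z, hz, hzμ⟩ := exists_mem_sphere_pow_eq_neg_pow hk hμ
  refine IsLeast.csInf_eq ⟨⟨z, hz, ?_⟩, ?_⟩
  · simp only
    rw [hzμ, neg_add_cancel, zero_pow hm, norm_zero]
  · rintro _ ⟨w, -, rfl⟩
    exact norm_nonneg _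

end ZeroOnSphere

theorem aziz_shah_sharp_general (n μ : ℕ) (k : ℝ) (hk0 : 0 < k)
    (hμn : μ ∣ n)
    (p : ℂ → ℂ) (hp : p = fun z => (z ^ μ + (k : ℂ) ^ μ) ^ (n / μ)) :
    sSup ((fun z => ‖deriv p z‖) '' sphere (0 : ℂ) 1) =
      (n / (1 + k ^ μ)) *
        (sSup ((fun z => ‖p z‖) '' sphere (0 : ℂ) 1) +
          (1 / k ^ (n - μ)) * sInf ((fun z => ‖p z‖) '' sphere (0 : ℂ) k)) := by
  subst hp
  rcases eq_or_ne n 0 with rfl | hn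
  · simp
  obtain ⟨m, rfl⟩ := hμn
  have hμ : μ ≠ 0 := left_ne_zero_of_mul hn
  have hm : m ≠ 0 := right_ne_zero_of_mul hn
  rw [Nat.mul_div_cancel_left m (Nat.pos_of_ne_zero hμ),
    csInf_norm_pow_add_pow_pow_sphere hk0.le hμ hm]
  simp only [← Complex.ofReal_pow]
  rw [csSup_norm_deriv_pow_add_ofReal_pow_unitSphere (by positivity),
    csSup_norm_pow_add_ofReal_pow_unitSphere (by positivity)]
  have hK : 1 + k ^ μ ≠ 0 := by positivity
  obtain ⟨j, rfl⟩ := Nat.exists_eq_add_one_of_ne_zero hm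
  rw [mul_zero, add_zero, Nat.add_sub_cancel, pow_succ]
  push_cast
  field_simp

theorem aziz_shah_sharp (n μ : ℕ) (k : ℝ) (hk0 : 0 < k) (hk : k ≤ 1)
    (hμ1 : 1 ≤ μ) (hμn : μ ∣ n)
    (p : ℂ → ℂ) (hp : p = fun z => (z ^ μ + (k : ℂ) ^ μ) ^ (n / μ)) :
    sSup ((fun z => ‖deriv p z‖) '' sphere (0 : ℂ) 1) =
      (n / (1 + k ^ μ)) *
        (sSup ((fun z => ‖p z‖) '' sphere (0 : ℂ) 1) +
          (1 / k ^ (n - μ)) * sInf ((fun z => ‖p z‖) '' sphere (0 : ℂ) k)) :=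
  aziz_shah_sharp_general n μ k hk0 hμn p hp
end

section
/- If p is a complex polynomial of degree n and q(z) = z^n · conj(p(1/conj(z))), then for every z with |z| = 1, |n·p(z) − z·p'(z)| = |q'(z)|. -/
/-!
On the unit circle `z⁻¹ = conj z`, and `q` is the reversal `reflect n (p.map conj)`.
Differentiating a reversal of degree `n` gives the reversal of degree `n - 1` of `n f - X f'`,
so `q'(z) = z ^ (n - 1) · conj (n p(z) - z p'(z))`, whose modulus is `|n p(z) - z p'(z)|`.
-/

open Polynomial

namespace Polynomial

section CommRing

variable {R : Type*} [CommRing R]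

/-- The polar derivative `D₀ f = n f - X f'` of `f` with respect to `0`, `f` regarded as
having degree `n`. -/
noncomputable def polarDerivZero (n : ℕ) (f : R[X]) : R[X] :=
  C (n : R) * f - X * derivative f

theorem coeff_polarDerivZero (n : ℕ) (f : R[X]) (i : ℕ) :
    (polarDerivZero n f).coeff i = ((n : R) - i) * f.coeff i := by
  cases i with
  | zero => simp [polarDerivZero]
  | succ i =>
    rw [polarDerivZero, coeff_sub, coeff_C_mul, coeff_X_mul, coeff_derivative]
    push_cast
    ring

theorem eval_polarDerivZero (n : ℕ) (f : R[X]) (z : R) :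
    (polarDerivZero n f).eval z = n * f.eval z - z * (derivative f).eval z := by
  simp [polarDerivZero]

theorem map_polarDerivZero {S : Type*} [CommRing S] (g : R →+* S) (n : ℕ) (f : R[X]) :
    (polarDerivZero n f).map g = polarDerivZero n (f.map g) := by
  simp [polarDerivZero, derivative_map]

theorem coeff_polarDerivZero_of_le {n i : ℕ} {f : R[X]} (hf : f.natDegree ≤ n) (hi : n ≤ i) :
    (polarDerivZero n f).coeff i = 0 := by
  rw [coeff_polarDerivZero]
  rcases hi.eq_or_lt with rfl | hlt
  · rw [sub_self, zero_mul]
  · rw [coeff_eq_zero_of_natDegree_lt (hf.trans_lt hlt), mul_zero]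

theorem natDegree_polarDerivZero_le {n : ℕ} {f : R[X]} (hf : f.natDegree ≤ n) :
    (polarDerivZero n f).natDegree ≤ n - 1 :=
  natDegree_le_iff_coeff_eq_zero.2 fun _ hi => coeff_polarDerivZero_of_le hf (by omega)

theorem derivative_reflect {n : ℕ} {f : R[X]} (hf : f.natDegree ≤ n) :
    derivative (reflect n f) = reflect (n - 1) (polarDerivZero n f) := by
  ext i
  rw [coeff_derivative, coeff_reflect, coeff_reflect]
  by_cases hi : i + 1 ≤ n
  · rw [revAt_le hi, revAt_le (by omega : i ≤ n - 1), show n - (i + 1) = n - 1 - i by omega,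
      coeff_polarDerivZero]
    have hcast : ((n - 1 - i : ℕ) : R) + (i + 1) = n := by
      rw [← Nat.cast_add_one, ← Nat.cast_add]
      congr 1
      omega
    linear_combination (f.coeff (n - 1 - i)) * hcast
  · have hrev : n ≤ revAt (n - 1) i := by
      rcases le_or_gt i (n - 1) with h | h
      · rw [revAt_le h]; omega
      · rw [revAt_eq_self_of_lt h]; omega
    rw [revAt_eq_self_of_lt (by omega : n < i + 1),
      coeff_eq_zero_of_natDegree_lt (by omega : f.natDegree < i + 1), zero_mul,
      coeff_polarDerivZero_of_le hf hrev]

end CommRing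

section Field

variable {K : Type*} [Field K]

theorem eval_reflect {N : ℕ} {f : K[X]} (hf : f.natDegree ≤ N) {z : K} (hz : z ≠ 0) :
    (reflect N f).eval z = z ^ N * f.eval z⁻¹ := by
  have : Invertible z⁻¹ := invertibleOfNonzero (inv_ne_zero hz)
  have h := eval₂_reflect_mul_pow (RingHom.id K) z⁻¹ N f hf
  rw [invOf_eq_inv, inv_inv, ← eval, ← eval, inv_pow] at h
  rw [← h, mul_comm, inv_mul_cancel_right₀ (pow_ne_zero N hz)]

theorem eq_reflect_of_eval_eq [Infinite K] {N : ℕ} {f q : K[X]} (hf : f.natDegree ≤ N)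
    (hq : ∀ z : K, z ≠ 0 → q.eval z = z ^ N * f.eval z⁻¹) :
    q = reflect N f :=
  eq_of_infinite_eval_eq _ _ <| (Set.finite_singleton 0).infinite_compl.mono
    fun z hz => (hq z hz).trans (eval_reflect hf hz).symm

end Field

end Polynomial

theorem reciprocal_derivative_identity_general (p q : Polynomial ℂ) (n : ℕ)
    (hdeg : p.natDegree = n)
    (hq : ∀ z : ℂ, z ≠ 0 →
      q.eval z = z ^ n * (starRingEnd ℂ) (p.eval ((starRingEnd ℂ) z)⁻¹)) :
    ∀ z : ℂ, ‖z‖ = 1 →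
      ‖(n : ℂ) * p.eval z - z * (derivative p).eval z‖ =
        ‖(derivative q).eval z‖ := by
  have hdeg_conj : (p.map (starRingEnd ℂ)).natDegree ≤ n := natDegree_map_le.trans hdeg.le
  have hq_reflect : q = reflect n (p.map (starRingEnd ℂ)) :=
    eq_reflect_of_eval_eq hdeg_conj fun z hz => by
      rw [hq z hz, ← map_inv₀, ← eval_map_apply, Complex.conj_conj]
  intro z hz
  have hz0 : z ≠ 0 := norm_ne_zero_iff.1 (hz ▸ one_ne_zero)
  rw [hq_reflect, derivative_reflect hdeg_conj,
    eval_reflect (natDegree_polarDerivZero_le hdeg_conj) hz0, ← map_polarDerivZero,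
    RCLike.inv_eq_conj hz, eval_map_apply, norm_mul, norm_pow, hz, one_pow, one_mul,
    Complex.norm_conj, eval_polarDerivZero]

theorem reciprocal_derivative_identity (p q : Polynomial ℂ) (n : ℕ) (hn : 1 ≤ n)
    (hdeg : p.natDegree = n)
    (hq : ∀ z : ℂ, z ≠ 0 →
      q.eval z = z ^ n * (starRingEnd ℂ) (p.eval ((starRingEnd ℂ) z)⁻¹)) :
    ∀ z : ℂ, ‖z‖ = 1 →
      ‖(n : ℂ) * p.eval z - z * (derivative p).eval z‖ =
        ‖(derivative q).eval z‖ :=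
  reciprocal_derivative_identity_general p q n hdeg hq
end
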